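/- arXiv:solv-int/9604004 — 5 statements merged into one kernel-verified Lean document; each statement's English description precedes it below -/
import Mathlib

section
/- Zero curvature representation is preserved under perturbation: if U(ε), V(ε) (truncated to order N in ε) satisfy ∂_t U − ∂_x V + [U,V] = 0 modulo ε^{N+1}, then the block lower-triangular Toeplitz matrices Û_N, V̂_N formed from their ε-Taylor coefficients satisfy ∂_t Û_N − ∂_x V̂_N + [Û_N, V̂_N] = 0 exactly. -/
/-- Block lower-triangular Toeplitz matrix of blocks. -/
def toep {R : Type*} [Ring R] (N : ℕ) (f : Fin (N + 1) → R) :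
    Matrix (Fin (N + 1)) (Fin (N + 1)) R :=
  fun i j =>
    if h : (j : ℕ) ≤ (i : ℕ) then
      f ⟨(i : ℕ) - (j : ℕ), by have := i.isLt; omega⟩
    else 0

open Finset in
lemma nat_conv {R : Type*} [Ring R] (N i k : ℕ) (hi : i ≤ N) (hk : k ≤ i)
    (F G : ℕ → R) :
    ∑ m ∈ range (N+1), (if m ≤ i then F (i-m) else 0) * (if k ≤ m then G (m-k) else 0)
    = ∑ j ∈ range (N+1), ∑ l ∈ range (N+1), if j + l = i - k then F j * G l else 0 := by
  set d := i - k with hd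
  have hL : ∑ m ∈ range (N+1),
      (if m ≤ i then F (i-m) else 0) * (if k ≤ m then G (m-k) else 0)
      = ∑ l ∈ range (d+1), F (d - l) * G l := by
    have h1 : ∀ m ∈ range (N+1),
        (if m ≤ i then F (i-m) else 0) * (if k ≤ m then G (m-k) else 0)
        = if m ∈ Icc k i then F (i-m) * G (m-k) else 0 := by
      intro m _
      by_cases h2 : m ∈ Icc k i
      · have h3 := mem_Icc.mp h2
        rw [if_pos h3.2, if_pos h3.1, if_pos h2]
      · rw [if_neg h2]
        rw [mem_Icc] at h2
        by_cases h4 : m ≤ i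
        · rw [if_pos h4, if_neg (by omega), mul_zero]
        · rw [if_neg h4, zero_mul]
    rw [Finset.sum_congr rfl h1, Finset.sum_ite_mem,
      Finset.inter_eq_right.mpr (by intro m hm; rw [mem_Icc] at hm; rw [mem_range]; omega)]
    refine Finset.sum_nbij' (fun m => m - k) (fun l => l + k) ?_ ?_ ?_ ?_ ?_
    all_goals intro a ha
    all_goals simp only [mem_Icc, mem_range] at *
    · omega
    · omega
    · omega
    · omega
    · congr 2 <;> omega
  rw [hL]
  have hR : ∀ j ∈ range (N+1),
      (∑ l ∈ range (N+1), if j + l = d then F j * G l else 0)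
      = if j ∈ range (d+1) then F j * G (d - j) else 0 := by
    intro j _
    by_cases hj : j ∈ range (d+1)
    · rw [if_pos hj]; rw [mem_range] at hj
      rw [Finset.sum_eq_single_of_mem (d - j) (by rw [mem_range]; omega)]
      · rw [if_pos (by omega)]
      · intro l _ hl; rw [if_neg (by omega)]
    · rw [if_neg hj]; rw [mem_range] at hj
      exact Finset.sum_eq_zero fun l _ => if_neg (by omega)
  rw [Finset.sum_congr rfl hR, Finset.sum_ite_mem,
    Finset.inter_eq_right.mpr (by intro l hl; rw [mem_range] at *; omega)]
  rw [← Finset.sum_range_reflect (fun j => F j * G (d - j)) (d+1)]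
  refine Finset.sum_congr rfl fun l hl => ?_
  rw [mem_range] at hl
  congr 2 <;> omega

open Finset in
lemma toep_mul {R : Type*} [Ring R] (N : ℕ) (f g : Fin (N+1) → R) :
    toep N f * toep N g
    = toep N (fun m => ∑ j : Fin (N+1), ∑ l : Fin (N+1),
        if (j : ℕ) + (l : ℕ) = (m : ℕ) then f j * g l else 0) := by
  ext i k
  rw [Matrix.mul_apply]
  set F : ℕ → R := fun j => if h : j ≤ N then f ⟨j, Nat.lt_succ_of_le h⟩ else 0 with hF
  set G : ℕ → R := fun j => if h : j ≤ N then g ⟨j, Nat.lt_succ_of_le h⟩ else 0 with hG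
  have hFf : ∀ (a : Fin (N+1)), F (a : ℕ) = f a := by
    intro a
    show (if h : (a:ℕ) ≤ N then f ⟨(a:ℕ), Nat.lt_succ_of_le h⟩ else 0) = f a
    rw [dif_pos (Nat.lt_succ_iff.mp a.isLt)]
  have hGg : ∀ (a : Fin (N+1)), G (a : ℕ) = g a := by
    intro a
    show (if h : (a:ℕ) ≤ N then g ⟨(a:ℕ), Nat.lt_succ_of_le h⟩ else 0) = g a
    rw [dif_pos (Nat.lt_succ_iff.mp a.isLt)]
  by_cases hk : (k : ℕ) ≤ (i : ℕ)
  · have hLHS : ∀ m : Fin (N+1), toep N f i m * toep N g m k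
        = (if (m:ℕ) ≤ (i:ℕ) then F ((i:ℕ)-(m:ℕ)) else 0) *
          (if (k:ℕ) ≤ (m:ℕ) then G ((m:ℕ)-(k:ℕ)) else 0) := by
      intro m
      simp only [toep]
      congr 1
      · split_ifs with h
        · rw [← hFf ⟨(i:ℕ)-(m:ℕ), by have := i.isLt; omega⟩]
        · rfl
      · split_ifs with h
        · rw [← hGg ⟨(m:ℕ)-(k:ℕ), by have := m.isLt; omega⟩]
        · rfl
    rw [Finset.sum_congr rfl (fun m _ => hLHS m),
      Fin.sum_univ_eq_sum_range
        (fun m => (if m ≤ (i:ℕ) then F ((i:ℕ)-m) else 0) * (if (k:ℕ) ≤ m then G (m-(k:ℕ)) else 0)),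
      nat_conv N i k (Nat.lt_succ_iff.mp i.isLt) hk F G]
    simp only [toep, dif_pos hk]
    have hinner : ∀ j : Fin (N+1),
        (∑ l : Fin (N+1), if (j:ℕ) + (l:ℕ) = (i:ℕ)-(k:ℕ) then f j * g l else 0)
        = ∑ l ∈ range (N+1), if (j:ℕ) + l = (i:ℕ)-(k:ℕ) then F (j:ℕ) * G l else 0 := by
      intro j
      rw [← Fin.sum_univ_eq_sum_range
        (fun l => if (j:ℕ) + l = (i:ℕ)-(k:ℕ) then F (j:ℕ) * G l else 0)]
      exact Finset.sum_congr rfl fun l _ => by rw [hFf, hGg]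
    rw [Finset.sum_congr rfl (fun j _ => hinner j),
      Fin.sum_univ_eq_sum_range
        (fun j => ∑ l ∈ range (N+1), if j + l = (i:ℕ)-(k:ℕ) then F j * G l else 0)]
  · simp only [toep, dif_neg hk]
    refine Finset.sum_eq_zero fun m _ => ?_
    by_cases h1 : (m:ℕ) ≤ (i:ℕ)
    · rw [dif_neg (show ¬(k:ℕ) ≤ (m:ℕ) by omega), mul_zero]
    · rw [dif_neg h1, zero_mul]

lemma toep_add {R : Type*} [Ring R] (N : ℕ) (f g : Fin (N+1) → R) :
    toep N f + toep N g = toep N (f + g) := by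
  ext i j
  show toep N f i j + toep N g i j = _
  simp only [toep, Pi.add_apply]
  split_ifs <;> simp

lemma toep_sub {R : Type*} [Ring R] (N : ℕ) (f g : Fin (N+1) → R) :
    toep N f - toep N g = toep N (f - g) := by
  ext i j
  show toep N f i j - toep N g i j = _
  simp only [toep, Pi.sub_apply]
  split_ifs <;> simp

lemma toep_zero {R : Type*} [Ring R] (N : ℕ) :
    toep N (0 : Fin (N+1) → R) = 0 := by
  ext i j
  show _ = (0 : R)
  simp only [toep, Pi.zero_apply]
  split_ifs <;> rfl

/-- if `∂_t U − ∂_x V + [U, V] = 0` holds modulo `ε^{N+1}`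
(i.e. for each ε-Taylor coefficient up to order `N`), then the block
lower-triangular Toeplitz matrices `Û_N`, `V̂_N` satisfy the zero curvature
equation `∂_t Û_N − ∂_x V̂_N + [Û_N, V̂_N] = 0` exactly. -/
theorem stmt4 {n N : ℕ}
    (U V Ut Vx : ℝ → ℝ → Fin (N + 1) → Matrix (Fin n) (Fin n) ℝ)
    (hU : ∀ (x t : ℝ) (m : Fin (N + 1)) (a b : Fin n),
      HasDerivAt (fun s => U x s m a b) (Ut x t m a b) t)
    (hV : ∀ (x t : ℝ) (m : Fin (N + 1)) (a b : Fin n),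
      HasDerivAt (fun y => V y t m a b) (Vx x t m a b) x)
    (hzc : ∀ (x t : ℝ) (m : Fin (N + 1)),
      Ut x t m - Vx x t m +
        ∑ j : Fin (N + 1), ∑ l : Fin (N + 1),
          (if (j : ℕ) + (l : ℕ) = (m : ℕ)
           then U x t j * V x t l - V x t j * U x t l else 0) = 0) :
    ∀ (x t : ℝ),
      (∀ (i j : Fin (N + 1)) (a b : Fin n),
        HasDerivAt (fun s => toep N (U x s) i j a b) (toep N (Ut x t) i j a b) t) ∧
      (∀ (i j : Fin (N + 1)) (a b : Fin n),
        HasDerivAt (fun y => toep N (V y t) i j a b) (toep N (Vx x t) i j a b) x) ∧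
      toep N (Ut x t) - toep N (Vx x t) +
        (toep N (U x t) * toep N (V x t) - toep N (V x t) * toep N (U x t)) = 0 := by
  intro x t
  refine ⟨?_, ?_, ?_⟩
  · intro i j a b
    by_cases h : (j : ℕ) ≤ (i : ℕ)
    · simp only [toep, dif_pos h]
      exact hU x t _ a b
    · simp only [toep, dif_neg h, Matrix.zero_apply]
      exact hasDerivAt_const t 0
  · intro i j a b
    by_cases h : (j : ℕ) ≤ (i : ℕ)
    · simp only [toep, dif_pos h]
      exact hV x t _ a b
    · simp only [toep, dif_neg h, Matrix.zero_apply]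
      exact hasDerivAt_const x 0
  · rw [toep_mul N (U x t) (V x t), toep_mul N (V x t) (U x t), toep_sub, toep_sub,
      toep_add, ← toep_zero N]
    refine congrArg (toep N) ?_
    funext m
    simp only [Pi.add_apply, Pi.sub_apply, Pi.zero_apply, ← Finset.sum_sub_distrib]
    have key : ∀ (j l : Fin (N + 1)),
        ((if (j : ℕ) + (l : ℕ) = (m : ℕ) then U x t j * V x t l else 0)
          - (if (j : ℕ) + (l : ℕ) = (m : ℕ) then V x t j * U x t l else 0))
        = if (j : ℕ) + (l : ℕ) = (m : ℕ)
          then U x t j * V x t l - V x t j * U x t l else 0 := by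
      intro j l
      split_ifs <;> simp
    calc Ut x t m - Vx x t m +
          ∑ j : Fin (N + 1), ∑ l : Fin (N + 1),
            ((if (j : ℕ) + (l : ℕ) = (m : ℕ) then U x t j * V x t l else 0)
              - (if (j : ℕ) + (l : ℕ) = (m : ℕ) then V x t j * U x t l else 0))
        = Ut x t m - Vx x t m +
          ∑ j : Fin (N + 1), ∑ l : Fin (N + 1),
            (if (j : ℕ) + (l : ℕ) = (m : ℕ)
             then U x t j * V x t l - V x t j * U x t l else 0) := by
          congr 1
          exact Finset.sum_congr rfl fun j _ => Finset.sum_congr rfl fun l _ => key j l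
      _ = 0 := hzc x t m
end

section
/- The 'perturbation' map on vector fields preserves Lie brackets: let per_N assign to a polynomial vector field K on ℝ^q the vector field K̂ on (ℝ^q)^{N+1} whose i-th component is (1/i!)·∂^i/∂ε^i|_{ε=0} K(Σ_{j} ε^j η_j). Then for any two polynomial vector fields K, S on ℝ^q, [K̂_N, Ŝ_N] = (per_N [K,S]), where [K,S](u) = K'(u)[S(u)] − S'(u)[K(u)] is the commutator of vector fields. -/
/-- The commutator of two vector fields: `[K,S](u) = K'(u)[S(u)] − S'(u)[K(u)]`. -/
noncomputable def vfBracket {F : Type*} [NormedAddCommGroup F] [NormedSpace ℝ F]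
    (K S : F → F) : F → F :=
  fun u => fderiv ℝ K u (S u) - fderiv ℝ S u (K u)

/-- The perturbation vector field of order `N`: the `i`-th component is
`(1/i!)·∂^i/∂ε^i|_{ε=0} K(∑_j ε^j η_j)`. -/
noncomputable def perN {q : ℕ} (N : ℕ) (K : (Fin q → ℝ) → (Fin q → ℝ)) :
    (Fin (N + 1) → Fin q → ℝ) → Fin (N + 1) → Fin q → ℝ :=
  fun η i => ((i : ℕ).factorial : ℝ)⁻¹ •
    iteratedDeriv (i : ℕ)
      (fun ε : ℝ => K (∑ j : Fin (N + 1), ε ^ (j : ℕ) • η j)) 0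

open scoped ContDiff

section helpers

variable {E F G : Type*} [NormedAddCommGroup E] [NormedSpace ℝ E]
  [NormedAddCommGroup F] [NormedSpace ℝ F] [NormedAddCommGroup G] [NormedSpace ℝ G]

private lemma natCast_le_inf (n : ℕ) : (n : WithTop ℕ∞) ≤ ∞ := by
  exact_mod_cast (le_top : (n : ℕ∞) ≤ ⊤)

private lemma inf_diff {f : E → F} (hf : ContDiff ℝ ∞ f) : Differentiable ℝ f :=
  (contDiff_infty.1 hf 1).differentiable one_ne_zero

private lemma itd_add {f g : ℝ → F} (hf : ContDiff ℝ ∞ f) (hg : ContDiff ℝ ∞ g)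
    (n : ℕ) (x : ℝ) :
    iteratedDeriv n (fun t => f t + g t) x = iteratedDeriv n f x + iteratedDeriv n g x := by
  simp only [← iteratedDerivWithin_univ]
  exact iteratedDerivWithin_add (Set.mem_univ x) uniqueDiffOn_univ
    (hf.of_le (natCast_le_inf n)).contDiffWithinAt (hg.of_le (natCast_le_inf n)).contDiffWithinAt

private lemma itd_sub {f g : ℝ → F} (hf : ContDiff ℝ ∞ f) (hg : ContDiff ℝ ∞ g)
    (n : ℕ) (x : ℝ) :
    iteratedDeriv n (fun t => f t - g t) x = iteratedDeriv n f x - iteratedDeriv n g x := by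
  simp only [← iteratedDerivWithin_univ]
  exact iteratedDerivWithin_sub (Set.mem_univ x) uniqueDiffOn_univ
    (hf.of_le (natCast_le_inf n)).contDiffWithinAt (hg.of_le (natCast_le_inf n)).contDiffWithinAt

private lemma itd_zero_fun (n : ℕ) (x : ℝ) : iteratedDeriv n (fun _ : ℝ => (0:F)) x = 0 := by
  induction n with
  | zero => simp
  | succ n ih =>
    rw [iteratedDeriv_succ']
    have h : deriv (fun _ : ℝ => (0:F)) = fun _ : ℝ => (0:F) := funext fun t => deriv_const t 0
    rw [h]
    exact ih

private lemma itd_sum {ι : Type*} (s : Finset ι) (f : ι → ℝ → F)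
    (hf : ∀ j, ContDiff ℝ ∞ (f j)) (n : ℕ) (x : ℝ) :
    iteratedDeriv n (fun t => ∑ j ∈ s, f j t) x = ∑ j ∈ s, iteratedDeriv n (f j) x := by
  classical
  induction s using Finset.induction_on with
  | empty => simpa using itd_zero_fun n x
  | insert a s' h ih =>
    simp only [Finset.sum_insert h]
    rw [itd_add (hf a) (ContDiff.sum fun j _ => hf j) n x, ih]

private lemma itd_monomial (m : ℕ) (c : F) (k : ℕ) :
    iteratedDeriv k (fun ε : ℝ => ε ^ m • c) =
      fun ε => ((m.descFactorial k : ℝ) * ε ^ (m - k)) • c := by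
  induction k with
  | zero => funext ε; simp
  | succ k ih =>
    funext ε
    rw [iteratedDeriv_succ, ih]
    have h : HasDerivAt (fun x : ℝ => ((m.descFactorial k : ℝ) * x ^ (m - k)) • c)
        (((m.descFactorial k : ℝ) * ((m - k : ℕ) * ε ^ (m - k - 1))) • c) ε :=
      ((hasDerivAt_pow (m - k) ε).const_mul _).smul_const c
    rw [h.deriv, Nat.sub_sub, Nat.descFactorial_succ, Nat.cast_mul]
    congr 1
    ring

end helpers

/-- Auxiliary: the curve `ε ↦ ∑ j ε^j • η j`. -/
private noncomputable def tau (q N : ℕ) (η : Fin (N+1) → Fin q → ℝ) (ε : ℝ) : Fin q → ℝ :=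
  ∑ j : Fin (N+1), ε ^ (j : ℕ) • η j

private lemma tau_contDiff (q N : ℕ) (η : Fin (N+1) → Fin q → ℝ) :
    ContDiff ℝ ∞ (fun ε => tau q N η ε) :=
  ContDiff.sum fun _ _ => (contDiff_id.pow _).smul contDiff_const

private lemma itd_tau (q N : ℕ) (w : Fin (N+1) → Fin q → ℝ) (k : ℕ) (hk : k < N + 1) :
    iteratedDeriv k (fun ε => tau q N w ε) 0 = (k.factorial : ℝ) • w ⟨k, hk⟩ := by
  have : (fun ε => tau q N w ε) = fun ε : ℝ => ∑ j : Fin (N+1), ε ^ (j : ℕ) • w j := rfl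
  rw [this, itd_sum (ι := Fin (N+1)) Finset.univ (fun j ε => ε ^ (j : ℕ) • w j)
    (fun j => (contDiff_id.pow _).smul contDiff_const) k 0]
  have hterm : ∀ j : Fin (N+1),
      iteratedDeriv k (fun ε : ℝ => ε ^ (j : ℕ) • w j) 0 =
        (((j : ℕ).descFactorial k : ℝ) * (0:ℝ) ^ ((j : ℕ) - k)) • w j := by
    intro j; rw [itd_monomial]
  simp only [hterm]
  rw [Finset.sum_eq_single (⟨k, hk⟩ : Fin (N+1))]
  · simp [Nat.descFactorial_self]
  · intro j _ hj
    have hjk : (j : ℕ) ≠ k := fun h => hj (Fin.ext h)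
    rcases lt_or_gt_of_ne hjk with h | h
    · simp [Nat.descFactorial_eq_zero_iff_lt.2 h]
    · simp [zero_pow (Nat.sub_ne_zero_of_lt h)]
  · intro h
    exact absurd (Finset.mem_univ _) h

section jets

variable {F G : Type*} [NormedAddCommGroup F] [NormedSpace ℝ F]
  [NormedAddCommGroup G] [NormedSpace ℝ G]

private lemma itd_clm_zero : ∀ (i : ℕ) (B : ℝ → F →L[ℝ] G) (d : ℝ → F),
    ContDiff ℝ ∞ B → ContDiff ℝ ∞ d → (∀ k ≤ i, iteratedDeriv k d 0 = 0) →
    iteratedDeriv i (fun ε => B ε (d ε)) 0 = 0 := by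
  intro i
  induction i with
  | zero =>
    intro B d _ _ h0
    have h := h0 0 le_rfl
    simp only [iteratedDeriv_zero] at h ⊢
    rw [h, map_zero]
  | succ i ih =>
    intro B d hB hd h0
    rw [iteratedDeriv_succ']
    have hder : deriv (fun ε => B ε (d ε)) =
        fun ε => (deriv B ε) (d ε) + B ε (deriv d ε) := by
      funext ε
      exact (((inf_diff hB) ε).hasDerivAt.clm_apply ((inf_diff hd) ε).hasDerivAt).deriv
    rw [hder]
    have hB' : ContDiff ℝ ∞ (deriv B) := (contDiff_infty_iff_deriv.1 hB).2
    have hd' : ContDiff ℝ ∞ (deriv d) := (contDiff_infty_iff_deriv.1 hd).2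
    rw [itd_add (hB'.clm_apply hd) (hB.clm_apply hd') i 0]
    rw [ih (deriv B) d hB' hd (fun k hk => h0 k (hk.trans (Nat.le_succ i))),
        ih B (deriv d) hB hd' (fun k hk => by
          rw [← iteratedDeriv_succ']
          exact h0 (k+1) (Nat.succ_le_succ hk)), add_zero]

private lemma itd_clm_congr (i : ℕ) (B : ℝ → F →L[ℝ] G) (a b : ℝ → F)
    (hB : ContDiff ℝ ∞ B) (ha : ContDiff ℝ ∞ a) (hb : ContDiff ℝ ∞ b)
    (h : ∀ k ≤ i, iteratedDeriv k a 0 = iteratedDeriv k b 0) :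
    iteratedDeriv i (fun ε => B ε (a ε)) 0 = iteratedDeriv i (fun ε => B ε (b ε)) 0 := by
  have hsplit : (fun ε => B ε (a ε)) = fun ε => B ε (b ε) + B ε (a ε - b ε) := by
    funext ε
    rw [← map_add]
    congr 1
    abel
  rw [hsplit, itd_add (hB.clm_apply hb) (hB.clm_apply (ha.sub hb)) i 0,
    itd_clm_zero i B (fun ε => a ε - b ε) hB (ha.sub hb)
      (fun k hk => by rw [itd_sub ha hb k 0, h k hk, sub_self]), add_zero]

end jets

section swap

variable {E F : Type*} [NormedAddCommGroup E] [NormedSpace ℝ E]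
  [NormedAddCommGroup F] [NormedSpace ℝ F]

private lemma hline (H : E × ℝ → F) (hH : Differentiable ℝ H) (η : E) (ε : ℝ) :
    deriv (fun ε => H (η, ε)) ε = fderiv ℝ H (η, ε) (0, 1) := by
  have h1 : HasDerivAt (fun ε : ℝ => (η, ε)) ((0:E), (1:ℝ)) ε :=
    (hasDerivAt_const ε η).prodMk (hasDerivAt_id ε)
  exact ((hH (η, ε)).hasFDerivAt.comp_hasDerivAt ε h1).deriv

private lemma swap_lemma : ∀ (i : ℕ) (G : E × ℝ → F), ContDiff ℝ ∞ G →
    Differentiable ℝ (fun η : E => iteratedDeriv i (fun ε => G (η, ε)) 0) ∧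
    ∀ (η v : E), fderiv ℝ (fun η : E => iteratedDeriv i (fun ε => G (η, ε)) 0) η v =
      iteratedDeriv i (fun ε => fderiv ℝ G (η, ε) (v, 0)) 0 := by
  intro i
  induction i with
  | zero =>
    intro G hG
    have hGd : Differentiable ℝ G := inf_diff hG
    have key : ∀ η : E, HasFDerivAt (fun η : E => G (η, 0))
        ((fderiv ℝ G (η, 0)).comp ((ContinuousLinearMap.id ℝ E).prod 0)) η := by
      intro η
      have hemb : HasFDerivAt (fun w : E => (w, (0:ℝ)))
          ((ContinuousLinearMap.id ℝ E).prod 0) η :=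
        (hasFDerivAt_id η).prodMk (hasFDerivAt_const (0:ℝ) η)
      exact (hGd (η, 0)).hasFDerivAt.comp η hemb
    constructor
    · intro η
      simp only [iteratedDeriv_zero]
      exact (key η).differentiableAt
    · intro η v
      simp only [iteratedDeriv_zero]
      rw [(key η).fderiv]
      simp
  | succ i ih =>
    intro G hG
    have hGd : Differentiable ℝ G := inf_diff hG
    have hfd : ContDiff ℝ ∞ (fderiv ℝ G) := (contDiff_infty_iff_fderiv.1 hG).2
    have hG₁ : ContDiff ℝ ∞ (fun p : E × ℝ => fderiv ℝ G p (0, 1)) :=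
      hfd.clm_apply contDiff_const
    have hEq : (fun η : E => iteratedDeriv (i+1) (fun ε => G (η, ε)) 0) =
        fun η : E => iteratedDeriv i (fun ε => fderiv ℝ G (η, ε) (0, 1)) 0 := by
      funext η
      rw [iteratedDeriv_succ']
      congr 1
      funext ε
      exact hline G hGd η ε
    obtain ⟨ihd, ihf⟩ := ih _ hG₁
    constructor
    · rw [hEq]; exact ihd
    · intro η v
      rw [hEq, ihf η v]
      have hG₂ : ContDiff ℝ ∞ (fun p : E × ℝ => fderiv ℝ G p (v, 0)) :=
        hfd.clm_apply contDiff_const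
      have hsymm : ∀ p : E × ℝ,
          fderiv ℝ (fun p : E × ℝ => fderiv ℝ G p (0, 1)) p (v, 0) =
          fderiv ℝ (fun p : E × ℝ => fderiv ℝ G p (v, 0)) p (0, 1) := by
        intro p
        have hD : HasFDerivAt (fderiv ℝ G) (fderiv ℝ (fderiv ℝ G) p) p :=
          ((inf_diff hfd) p).hasFDerivAt
        have e1 := hD.clm_apply (hasFDerivAt_const ((0:E), (1:ℝ)) p)
        have e2 := hD.clm_apply (hasFDerivAt_const ((v:E), (0:ℝ)) p)
        rw [e1.fderiv, e2.fderiv]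
        simp only [ContinuousLinearMap.add_apply, ContinuousLinearMap.coe_comp',
          Function.comp_apply, ContinuousLinearMap.flip_apply, fderiv_const,
          Pi.zero_apply, ContinuousLinearMap.zero_apply, map_zero, zero_add]
        exact second_derivative_symmetric (fun y => (hGd y).hasFDerivAt) hD (v, 0) (0, 1)
      calc iteratedDeriv i (fun ε => fderiv ℝ (fun p : E × ℝ => fderiv ℝ G p (0,1)) (η, ε) (v, 0)) 0
          = iteratedDeriv i (fun ε => fderiv ℝ (fun p : E × ℝ => fderiv ℝ G p (v,0)) (η, ε) (0, 1)) 0 := by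
            congr 1; funext ε; exact hsymm (η, ε)
        _ = iteratedDeriv i (deriv (fun ε => fderiv ℝ G (η, ε) (v, 0))) 0 := by
            congr 1; funext ε
            exact (hline (fun p : E × ℝ => fderiv ℝ G p (v, 0)) (inf_diff hG₂) η ε).symm
        _ = iteratedDeriv (i+1) (fun ε => fderiv ℝ G (η, ε) (v, 0)) 0 := by
            rw [← iteratedDeriv_succ']

end swap

private lemma perN_fderiv {q N : ℕ} (K : (Fin q → ℝ) → (Fin q → ℝ)) (hK : ContDiff ℝ ∞ K) :
    Differentiable ℝ (perN N K) ∧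
    ∀ η v (i : Fin (N+1)), fderiv ℝ (perN N K) η v i = ((i : ℕ).factorial : ℝ)⁻¹ •
      iteratedDeriv (i : ℕ)
        (fun ε : ℝ => fderiv ℝ K (tau q N η ε) (tau q N v ε)) 0 := by
  have hT : ContDiff ℝ ∞ (fun p : (Fin (N+1) → Fin q → ℝ) × ℝ => tau q N p.1 p.2) :=
    ContDiff.sum fun j _ => (contDiff_snd.pow _).smul (contDiff_pi.1 contDiff_fst j)
  have hG : ContDiff ℝ ∞ (fun p : (Fin (N+1) → Fin q → ℝ) × ℝ => K (tau q N p.1 p.2)) :=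
    hK.comp hT
  have hGd : Differentiable ℝ (fun p : (Fin (N+1) → Fin q → ℝ) × ℝ => K (tau q N p.1 p.2)) :=
    inf_diff hG
  have hKd : Differentiable ℝ K := inf_diff hK
  -- components of perN
  have hcomp : ∀ i : Fin (N+1), (fun η => perN N K η i) =
      fun η => ((i : ℕ).factorial : ℝ)⁻¹ •
        (fun η => iteratedDeriv (i : ℕ)
          (fun ε => (fun p : (Fin (N+1) → Fin q → ℝ) × ℝ => K (tau q N p.1 p.2)) (η, ε)) 0) η :=
    fun i => rfl
  have hdiff : ∀ i : Fin (N+1), Differentiable ℝ (fun η => perN N K η i) := by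
    intro i
    rw [hcomp i]
    exact ((swap_lemma (i : ℕ) _ hG).1).const_smul (((i : ℕ).factorial : ℝ)⁻¹)
  -- the partial derivative in the η-direction
  have hpart : ∀ (η v : Fin (N+1) → Fin q → ℝ) (ε : ℝ),
      fderiv ℝ (fun p : (Fin (N+1) → Fin q → ℝ) × ℝ => K (tau q N p.1 p.2)) (η, ε) (v, 0) =
      fderiv ℝ K (tau q N η ε) (tau q N v ε) := by
    intro η v ε
    set L : (Fin (N+1) → Fin q → ℝ) →L[ℝ] (Fin q → ℝ) :=
      ∑ j : Fin (N+1), (ε ^ (j : ℕ)) • ContinuousLinearMap.proj j with hLdef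
    have hLapp : ∀ w, L w = tau q N w ε := by
      intro w
      simp [hLdef, tau, ContinuousLinearMap.sum_apply]
    have hemb : HasFDerivAt (fun w : Fin (N+1) → Fin q → ℝ => (w, ε))
        ((ContinuousLinearMap.id ℝ _).prod 0) η :=
      (hasFDerivAt_id η).prodMk (hasFDerivAt_const ε η)
    have h1 : HasFDerivAt (fun w : Fin (N+1) → Fin q → ℝ => K (tau q N w ε))
        ((fderiv ℝ (fun p : (Fin (N+1) → Fin q → ℝ) × ℝ => K (tau q N p.1 p.2)) (η, ε)).comp
          ((ContinuousLinearMap.id ℝ _).prod 0)) η :=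
      by have h := (hGd (η, ε)).hasFDerivAt.comp η hemb; exact h
    have h2 : HasFDerivAt (fun w : Fin (N+1) → Fin q → ℝ => K (tau q N w ε))
        ((fderiv ℝ K (tau q N η ε)).comp L) η := by
      have base : HasFDerivAt (fun w => K (L w)) ((fderiv ℝ K (L η)).comp L) η :=
        (hKd (L η)).hasFDerivAt.comp η L.hasFDerivAt
      have hfun : (fun w : Fin (N+1) → Fin q → ℝ => K (L w)) =
          fun w => K (tau q N w ε) := by
        funext w; rw [hLapp w]
      rw [hfun, hLapp η] at base
      exact base
    have huniq := h1.unique h2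
    calc fderiv ℝ (fun p : (Fin (N+1) → Fin q → ℝ) × ℝ => K (tau q N p.1 p.2)) (η, ε) (v, 0)
        = ((fderiv ℝ (fun p : (Fin (N+1) → Fin q → ℝ) × ℝ => K (tau q N p.1 p.2)) (η, ε)).comp
            ((ContinuousLinearMap.id ℝ _).prod 0)) v := by simp
      _ = ((fderiv ℝ K (tau q N η ε)).comp L) v := by rw [huniq]
      _ = fderiv ℝ K (tau q N η ε) (tau q N v ε) := by
            rw [ContinuousLinearMap.comp_apply, hLapp v]
  refine ⟨differentiable_pi'' hdiff, ?_⟩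
  intro η v i
  have hPi : fderiv ℝ (perN N K) η =
      ContinuousLinearMap.pi (fun i => fderiv ℝ (fun η => perN N K η i) η) :=
    fderiv_pi (fun i => (hdiff i).differentiableAt)
  rw [hPi, ContinuousLinearMap.pi_apply, hcomp i,
    fderiv_fun_const_smul ((swap_lemma (i : ℕ) _ hG).1).differentiableAt
      (((i : ℕ).factorial : ℝ)⁻¹)]
  rw [ContinuousLinearMap.smul_apply, (swap_lemma (i : ℕ) _ hG).2 η v]
  have hfun : (fun ε => fderiv ℝ (fun p : (Fin (N+1) → Fin q → ℝ) × ℝ =>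
      K (tau q N p.1 p.2)) (η, ε) (v, 0)) =
      fun ε : ℝ => fderiv ℝ K (tau q N η ε) (tau q N v ε) := funext (hpart η v)
  rw [hfun]

/-- the perturbation map on vector fields preserves Lie brackets:
`[per_N K, per_N S] = per_N [K, S]`. -/
theorem stmt7 (q N : ℕ) (K S : (Fin q → ℝ) → (Fin q → ℝ))
    (hK : ContDiff ℝ (⊤ : ℕ∞) K) (hS : ContDiff ℝ (⊤ : ℕ∞) S) :
    vfBracket (perN N K) (perN N S) = perN N (vfBracket K S) := by
  have hK' : ContDiff ℝ ∞ K := hK.of_le (by simp)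
  have hS' : ContDiff ℝ ∞ S := hS.of_le (by simp)
  obtain ⟨hKd, hKf⟩ := perN_fderiv K hK'
  obtain ⟨hSd, hSf⟩ := perN_fderiv S hS'
  funext η i
  have hτη : ContDiff ℝ ∞ (fun ε => tau q N η ε) := tau_contDiff q N η
  have key : ∀ (X Y : (Fin q → ℝ) → (Fin q → ℝ)), ContDiff ℝ ∞ X → ContDiff ℝ ∞ Y →
      iteratedDeriv (i : ℕ) (fun ε => fderiv ℝ X (tau q N η ε) (tau q N (perN N Y η) ε)) 0 =
      iteratedDeriv (i : ℕ) (fun ε => fderiv ℝ X (tau q N η ε) (Y (tau q N η ε))) 0 := by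
    intro X Y hX hY
    apply itd_clm_congr (i : ℕ) (fun ε => fderiv ℝ X (tau q N η ε))
      (fun ε => tau q N (perN N Y η) ε) (fun ε => Y (tau q N η ε))
      ((contDiff_infty_iff_fderiv.1 hX).2.comp hτη)
      (tau_contDiff q N _) (hY.comp hτη)
    intro k hk
    have hk' : k < N + 1 := lt_of_le_of_lt hk i.isLt
    rw [itd_tau q N (perN N Y η) k hk']
    have hval : perN N Y η ⟨k, hk'⟩ =
        (k.factorial : ℝ)⁻¹ • iteratedDeriv k (fun ε => Y (tau q N η ε)) 0 := rfl
    rw [hval, smul_smul, mul_inv_cancel₀ (by exact_mod_cast k.factorial_ne_zero), one_smul]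
  have hBK : ContDiff ℝ ∞ (fun ε => fderiv ℝ K (tau q N η ε)) :=
    (contDiff_infty_iff_fderiv.1 hK').2.comp hτη
  have hBS : ContDiff ℝ ∞ (fun ε => fderiv ℝ S (tau q N η ε)) :=
    (contDiff_infty_iff_fderiv.1 hS').2.comp hτη
  show fderiv ℝ (perN N K) η (perN N S η) i - fderiv ℝ (perN N S) η (perN N K η) i =
    perN N (vfBracket K S) η i
  rw [hKf η (perN N S η) i, hSf η (perN N K η) i, key K S hK' hS', key S K hS' hK']
  have hRHS : perN N (vfBracket K S) η i = ((i : ℕ).factorial : ℝ)⁻¹ •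
      iteratedDeriv (i : ℕ) (fun ε => fderiv ℝ K (tau q N η ε) (S (tau q N η ε)) -
        fderiv ℝ S (tau q N η ε) (K (tau q N η ε))) 0 := rfl
  have h1 : ContDiff ℝ ∞ (fun ε => fderiv ℝ K (tau q N η ε) (S (tau q N η ε))) :=
    hBK.clm_apply (hS'.comp hτη)
  have h2 : ContDiff ℝ ∞ (fun ε => fderiv ℝ S (tau q N η ε) (K (tau q N η ε))) :=
    hBS.clm_apply (hK'.comp hτη)
  rw [hRHS, itd_sub h1 h2 (i : ℕ) 0, smul_sub]
end

section
/- Chain-rule identity for perturbation coefficients: for a polynomial map X : ℝ^q → ℝ^m and û_i = Σ_{l=0}^{i} ε^l η_l, the Gateaux derivative of the i-th ε-Taylor coefficient X^{(i)}(η_0,…,η_i) := (1/i!)∂^i X(û_i)/∂ε^i|_{ε=0} in the direction (S_0,…,S_i) equals the i-th ε-Taylor coefficient of X'(û_i)[Σ_{j=0}^{i} ε^j S_j]. -/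
section Aux

variable {E M : Type*} [NormedAddCommGroup E] [NormedSpace ℝ E]
  [NormedAddCommGroup M] [NormedSpace ℝ M]

/-- The pointwise partial derivative in the second (real) variable, as an
application of the full Fréchet derivative. -/
lemma deriv_slice (Φ : E × ℝ → M) (hΦ : ContDiff ℝ (⊤ : ℕ∞) Φ) (x : E) :
    deriv (fun ε => Φ (x, ε)) = fun ε => fderiv ℝ Φ (x, ε) (0, 1) := by
  funext ε
  exact (((hΦ.differentiable (by simp) (x, ε)).hasFDerivAt).comp_hasDerivAt ε
    (HasDerivAt.prodMk (hasDerivAt_const ε x) (hasDerivAt_id ε))).deriv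

/-- The iterated partial derivative in the second variable of a smooth map is
smooth jointly. -/
lemma smoothIter :
    ∀ (n : ℕ) (Φ : E × ℝ → M), ContDiff ℝ (⊤ : ℕ∞) Φ →
      ContDiff ℝ (⊤ : ℕ∞) (fun p : E × ℝ => iteratedDeriv n (fun ε => Φ (p.1, ε)) p.2) := by
  intro n
  induction n with
  | zero => intro Φ hΦ; simpa [iteratedDeriv_zero] using hΦ
  | succ n ih =>
    intro Φ hΦ
    have hG : ContDiff ℝ (⊤ : ℕ∞) (fun p : E × ℝ => fderiv ℝ Φ p (0, 1)) :=
      (hΦ.fderiv_right (mod_cast le_top)).clm_apply contDiff_const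
    simp only [iteratedDeriv_succ', deriv_slice Φ hΦ]
    exact ih _ hG

end Aux

section Comm

variable {M : Type*} [NormedAddCommGroup M] [NormedSpace ℝ M]

lemma hasDerivAt_slice2 (Φ : ℝ × ℝ → M) (hΦ : ContDiff ℝ (⊤ : ℕ∞) Φ) (v : ℝ × ℝ)
    (a ε : ℝ) :
    HasDerivAt (fun ε' => fderiv ℝ Φ (a, ε') v)
      (fderiv ℝ (fderiv ℝ Φ) (a, ε) (0, 1) v) ε := by
  have hFd : ContDiff ℝ (⊤ : ℕ∞) (fderiv ℝ Φ) := hΦ.fderiv_right (mod_cast le_top)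
  have happ : HasFDerivAt (fun q => fderiv ℝ Φ q v)
      ((ContinuousLinearMap.apply ℝ M v).comp (fderiv ℝ (fderiv ℝ Φ) (a, ε))) (a, ε) :=
    (ContinuousLinearMap.apply ℝ M v).hasFDerivAt.comp (a, ε)
      (hFd.differentiable (by simp) (a, ε)).hasFDerivAt
  simpa [Function.comp_def] using happ.comp_hasDerivAt ε (HasDerivAt.prodMk (hasDerivAt_const ε a) (hasDerivAt_id ε))

lemma hasDerivAt_slice1 (Φ : ℝ × ℝ → M) (hΦ : ContDiff ℝ (⊤ : ℕ∞) Φ) (v : ℝ × ℝ)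
    (a ε : ℝ) :
    HasDerivAt (fun t => fderiv ℝ Φ (t, ε) v)
      (fderiv ℝ (fderiv ℝ Φ) (a, ε) (1, 0) v) a := by
  have hFd : ContDiff ℝ (⊤ : ℕ∞) (fderiv ℝ Φ) := hΦ.fderiv_right (mod_cast le_top)
  have happ : HasFDerivAt (fun q => fderiv ℝ Φ q v)
      ((ContinuousLinearMap.apply ℝ M v).comp (fderiv ℝ (fderiv ℝ Φ) (a, ε))) (a, ε) :=
    (ContinuousLinearMap.apply ℝ M v).hasFDerivAt.comp (a, ε)
      (hFd.differentiable (by simp) (a, ε)).hasFDerivAt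
  simpa [Function.comp_def] using happ.comp_hasDerivAt a (HasDerivAt.prodMk (hasDerivAt_id a) (hasDerivAt_const a ε))

/-- Clairaut-type commutation: the first-variable derivative of the `n`-th
second-variable derivative of a smooth function of two real variables equals
the `n`-th second-variable derivative of the first-variable derivative. -/
lemma comm_deriv :
    ∀ (n : ℕ) (F : ℝ × ℝ → M), ContDiff ℝ (⊤ : ℕ∞) F → ∀ a b : ℝ,
      deriv (fun t => iteratedDeriv n (fun ε => F (t, ε)) b) a
        = iteratedDeriv n (fun ε => deriv (fun t => F (t, ε)) a) b := by
  intro n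
  induction n with
  | zero => intro F hF a b; simp [iteratedDeriv_zero]
  | succ n ih =>
    intro F hF a b
    have hFd : ContDiff ℝ (⊤ : ℕ∞) (fderiv ℝ F) := hF.fderiv_right (mod_cast le_top)
    have hG : ContDiff ℝ (⊤ : ℕ∞) (fun p : ℝ × ℝ => fderiv ℝ F p (0, 1)) :=
      hFd.clm_apply contDiff_const
    have hsymm : ∀ p : ℝ × ℝ,
        fderiv ℝ (fderiv ℝ F) p (1, 0) (0, 1) = fderiv ℝ (fderiv ℝ F) p (0, 1) (1, 0) :=
      fun p => second_derivative_symmetric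
        (fun y => (hF.differentiable (by simp) y).hasFDerivAt)
        (hFd.differentiable (by simp) p).hasFDerivAt _ _
    -- left-hand side
    have lhs_eq :
        deriv (fun t => iteratedDeriv (n + 1) (fun ε => F (t, ε)) b) a
          = iteratedDeriv n (fun ε => fderiv ℝ (fderiv ℝ F) (a, ε) (1, 0) (0, 1)) b := by
      simp only [iteratedDeriv_succ', deriv_slice F hF]
      rw [ih _ hG a b]
      congr 1
      funext ε
      exact (hasDerivAt_slice1 F hF (0, 1) a ε).deriv
    -- right-hand side
    have rhs_eq :
        iteratedDeriv (n + 1) (fun ε => deriv (fun t => F (t, ε)) a) b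
          = iteratedDeriv n (fun ε => fderiv ℝ (fderiv ℝ F) (a, ε) (0, 1) (1, 0)) b := by
      have h1 : (fun ε => deriv (fun t => F (t, ε)) a)
          = fun ε => fderiv ℝ F (a, ε) (1, 0) := by
        funext ε
        exact (((hF.differentiable (by simp) (a, ε)).hasFDerivAt).comp_hasDerivAt a
          (HasDerivAt.prodMk (hasDerivAt_id a) (hasDerivAt_const a ε))).deriv
      rw [h1, iteratedDeriv_succ']
      congr 1
      funext ε
      exact (hasDerivAt_slice2 F hF (1, 0) a ε).deriv
    rw [lhs_eq, rhs_eq]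
    congr 1
    funext ε
    exact hsymm (a, ε)

end Comm

/-- chain-rule identity for perturbation coefficients: the Gateaux
derivative of the `i`-th ε-Taylor coefficient
`X^{(i)}(η_0,…,η_i) = (1/i!)·∂^i/∂ε^i|_{ε=0} X(∑_j ε^j η_j)` in the direction
`(S_0,…,S_i)` equals the `i`-th ε-Taylor coefficient of
`X'(û_i)[∑_j ε^j S_j]`. -/
theorem stmt8 (q m i : ℕ) (X : (Fin q → ℝ) → (Fin m → ℝ))
    (hX : ContDiff ℝ (⊤ : ℕ∞) X)
    (η S : Fin (i + 1) → Fin q → ℝ) :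
    fderiv ℝ
      (fun η' : Fin (i + 1) → Fin q → ℝ =>
        ((i.factorial : ℝ)⁻¹ •
          iteratedDeriv i
            (fun ε : ℝ => X (∑ j : Fin (i + 1), ε ^ (j : ℕ) • η' j)) 0))
      η S =
    (i.factorial : ℝ)⁻¹ •
      iteratedDeriv i
        (fun ε : ℝ =>
          fderiv ℝ X (∑ j : Fin (i + 1), ε ^ (j : ℕ) • η j)
            (∑ j : Fin (i + 1), ε ^ (j : ℕ) • S j)) 0 := by
  classical
  set c : ℝ := (i.factorial : ℝ)⁻¹ with hc
  set Φ : (Fin (i + 1) → Fin q → ℝ) × ℝ → (Fin m → ℝ) := fun p => X (∑ j : Fin (i + 1), p.2 ^ (j : ℕ) • p.1 j)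
    with hΦdef
  have hΦ : ContDiff ℝ (⊤ : ℕ∞) Φ := by
    apply hX.comp
    apply ContDiff.sum
    intro j _
    exact (contDiff_snd.pow (j : ℕ)).smul
      ((ContinuousLinearMap.proj j : (Fin (i + 1) → Fin q → ℝ) →L[ℝ] (Fin q → ℝ)).contDiff.comp contDiff_fst)
  set A : (Fin (i + 1) → Fin q → ℝ) → (Fin m → ℝ) :=
    fun η' => iteratedDeriv i (fun ε : ℝ => X (∑ j : Fin (i + 1), ε ^ (j : ℕ) • η' j)) 0
    with hAdef
  have hA : ContDiff ℝ (⊤ : ℕ∞) A := by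
    have := (smoothIter i Φ hΦ).comp
      ((ContDiff.prodMk contDiff_id contDiff_const : ContDiff ℝ (⊤ : ℕ∞) (fun η' : Fin (i + 1) → Fin q → ℝ => (η', (0:ℝ)))))
    exact this
  have hAη : DifferentiableAt ℝ A η := hA.differentiable (by simp) η
  have hsmul : fderiv ℝ (fun η' : Fin (i + 1) → Fin q → ℝ => c • A η') η S = c • fderiv ℝ A η S := by
    rw [fderiv_fun_const_smul hAη c]; rfl
  rw [show (fun η' : Fin (i + 1) → Fin q → ℝ =>
      ((i.factorial : ℝ)⁻¹ •
        iteratedDeriv i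
          (fun ε : ℝ => X (∑ j : Fin (i + 1), ε ^ (j : ℕ) • η' j)) 0))
      = fun η' : Fin (i + 1) → Fin q → ℝ => c • A η' from rfl, hsmul, hc]
  congr 1
  -- directional derivative as a derivative along a line
  have hline : HasDerivAt (fun t : ℝ => η + t • S) S 0 := by
    simpa using HasDerivAt.const_add η (HasDerivAt.smul_const (hasDerivAt_id (0:ℝ)) S)
  have h0 : η + (0:ℝ) • S = η := by simp
  have hcomp : HasDerivAt (fun t : ℝ => A (η + t • S)) (fderiv ℝ A η S) 0 := by
    have hfd : HasFDerivAt A (fderiv ℝ A η) (η + (0:ℝ) • S) := by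
      rw [h0]; exact hAη.hasFDerivAt
    exact hfd.comp_hasDerivAt 0 hline
  rw [← hcomp.deriv]
  -- the two-variable function
  set F₂ : ℝ × ℝ → (Fin m → ℝ) :=
    fun p => X (∑ j : Fin (i + 1), p.2 ^ (j : ℕ) • (η j + p.1 • S j)) with hF₂def
  have hF₂ : ContDiff ℝ (⊤ : ℕ∞) F₂ := by
    apply hX.comp
    apply ContDiff.sum
    intro j _
    exact (contDiff_snd.pow (j : ℕ)).smul
      (contDiff_const.add (contDiff_fst.smul contDiff_const))
  have hAF : (fun t : ℝ => A (η + t • S)) = fun t => iteratedDeriv i (fun ε => F₂ (t, ε)) 0 := by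
    funext t
    rfl
  rw [hAF, comm_deriv i F₂ hF₂ 0 0]
  congr 1
  funext ε
  set u : Fin q → ℝ := ∑ j : Fin (i + 1), ε ^ (j : ℕ) • η j with hu
  set v : Fin q → ℝ := ∑ j : Fin (i + 1), ε ^ (j : ℕ) • S j with hv
  have hrw : ∀ t : ℝ, (∑ j : Fin (i + 1), ε ^ (j : ℕ) • (η j + t • S j)) = u + t • v := by
    intro t
    rw [hu, hv, Finset.smul_sum, ← Finset.sum_add_distrib]
    refine Finset.sum_congr rfl fun j _ => ?_
    rw [smul_add, smul_comm]
  have hlin : HasDerivAt (fun t : ℝ => u + t • v) v 0 := by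
    simpa using HasDerivAt.const_add u (HasDerivAt.smul_const (hasDerivAt_id (0:ℝ)) v)
  have h0' : u + (0:ℝ) • v = u := by simp
  have hXd : HasFDerivAt X (fderiv ℝ X u) (u + (0:ℝ) • v) := by
    rw [h0']; exact (hX.differentiable (by simp) u).hasFDerivAt
  have hder : HasDerivAt (fun t : ℝ => F₂ (t, ε)) (fderiv ℝ X u v) 0 := by
    have : HasDerivAt (fun t : ℝ => X (u + t • v)) (fderiv ℝ X u v) 0 :=
      hXd.comp_hasDerivAt 0 hlin
    simpa only [hF₂def, hrw] using this
  exact hder.deriv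
end

section
/- The first-order perturbation of a hereditary operator is hereditary: if Φ : V → End(V) is a polynomial (or smooth) operator-valued function on a vector space V that is hereditary, i.e. Φ'(u)[Φ(u)K]S − Φ(u)Φ'(u)[K]S is symmetric in K, S ∈ V for every u, then the operator Φ̂ on V × V defined by Φ̂(η_0,η_1) = [[Φ(η_0), 0],[Φ'(η_0)[η_1], Φ(η_0)]] (block 2×2) is hereditary on V × V. -/
variable {E : Type*} [NormedAddCommGroup E] [NormedSpace ℝ E]

/-- A (smooth) operator-valued field `Φ` is hereditary if
`Φ'(u)[Φ(u)K]S − Φ(u)Φ'(u)[K]S − Φ'(u)[Φ(u)S]K + Φ(u)Φ'(u)[S]K = 0`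
for all `u, K, S`, where `Φ'(u)[w] = fderiv ℝ Φ u w`. -/
def Hereditary {F : Type*} [NormedAddCommGroup F] [NormedSpace ℝ F]
    (Φ : F → F →L[ℝ] F) : Prop :=
  ∀ u K S : F,
    fderiv ℝ Φ u (Φ u K) S - Φ u (fderiv ℝ Φ u K S)
      - fderiv ℝ Φ u (Φ u S) K + Φ u (fderiv ℝ Φ u S K) = 0

/-- The first-order perturbation operator
`Φ̂(η₀,η₁) = [[Φ(η₀), 0], [Φ'(η₀)[η₁], Φ(η₀)]]` on `E × E`. -/
noncomputable def perturb1 (Φ : E → E →L[ℝ] E) (η : E × E) :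
    (E × E) →L[ℝ] (E × E) :=
  ((Φ η.1).comp (ContinuousLinearMap.fst ℝ E E)).prod
    (((fderiv ℝ Φ η.1 η.2).comp (ContinuousLinearMap.fst ℝ E E)) +
      (Φ η.1).comp (ContinuousLinearMap.snd ℝ E E))

open ContinuousLinearMap

/-- The block-assembly map, as a continuous linear map on pairs of operators. -/
noncomputable def Lmap : ((E →L[ℝ] E) × (E →L[ℝ] E)) →L[ℝ] ((E × E) →L[ℝ] (E × E)) :=
  ((compL ℝ (E × E) E (E × E) (inl ℝ E E)).comp
      (((compL ℝ (E × E) E E).flip (fst ℝ E E)).comp (ContinuousLinearMap.fst ℝ _ _)))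
  + ((compL ℝ (E × E) E (E × E) (inr ℝ E E)).comp
      (((compL ℝ (E × E) E E).flip (fst ℝ E E)).comp (ContinuousLinearMap.snd ℝ _ _)))
  + ((compL ℝ (E × E) E (E × E) (inr ℝ E E)).comp
      (((compL ℝ (E × E) E E).flip (snd ℝ E E)).comp (ContinuousLinearMap.fst ℝ _ _)))

lemma Lmap_apply (p : (E →L[ℝ] E) × (E →L[ℝ] E)) (x : E × E) :
    Lmap p x = (p.1 x.1, p.2 x.1 + p.1 x.2) := by
  simp [Lmap, Prod.ext_iff]

lemma perturb1_apply (Φ : E → E →L[ℝ] E) (η x : E × E) :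
    perturb1 Φ η x = (Φ η.1 x.1, fderiv ℝ Φ η.1 η.2 x.1 + Φ η.1 x.2) := by
  simp [perturb1]

lemma perturb1_eq (Φ : E → E →L[ℝ] E) (η : E × E) :
    perturb1 Φ η = Lmap (Φ η.1, fderiv ℝ Φ η.1 η.2) := by
  ext x <;> simp [perturb1_apply, Lmap_apply]

lemma fderiv_perturb1 (Φ : E → E →L[ℝ] E) (hΦ : ContDiff ℝ (⊤ : ℕ∞) Φ) (η w x : E × E) :
    fderiv ℝ (perturb1 Φ) η w x =
      (fderiv ℝ Φ η.1 w.1 x.1,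
        fderiv ℝ Φ η.1 w.2 x.1 + fderiv ℝ (fderiv ℝ Φ) η.1 w.1 η.2 x.1
          + fderiv ℝ Φ η.1 w.1 x.2) := by
  have hd1 : ∀ y : E, HasFDerivAt Φ (fderiv ℝ Φ y) y :=
    fun y => (hΦ.differentiable (by simp) y).hasFDerivAt
  have hΦ' : ContDiff ℝ (⊤ : ℕ∞) (fderiv ℝ Φ) := hΦ.fderiv_right (by simp)
  have hd2 : ∀ y : E, HasFDerivAt (fderiv ℝ Φ) (fderiv ℝ (fderiv ℝ Φ) y) y :=
    fun y => (hΦ'.differentiable (by simp) y).hasFDerivAt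
  have hg1 : HasFDerivAt (fun η : E × E => Φ η.1)
      ((fderiv ℝ Φ η.1).comp (ContinuousLinearMap.fst ℝ E E)) η :=
    (hd1 η.1).comp η (hasFDerivAt_fst)
  have hc : HasFDerivAt (fun η : E × E => fderiv ℝ Φ η.1)
      ((fderiv ℝ (fderiv ℝ Φ) η.1).comp (ContinuousLinearMap.fst ℝ E E)) η :=
    (hΦ'.differentiable (by simp) η.1).hasFDerivAt.comp η (hasFDerivAt_fst)
  have hg2 : HasFDerivAt (fun η : E × E => fderiv ℝ Φ η.1 η.2)
      ((fderiv ℝ Φ η.1).comp (ContinuousLinearMap.snd ℝ E E) +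
        ((fderiv ℝ (fderiv ℝ Φ) η.1).comp (ContinuousLinearMap.fst ℝ E E)).flip η.2) η :=
    hc.clm_apply (hasFDerivAt_snd)
  have hg : HasFDerivAt (perturb1 Φ)
      (Lmap.comp ((((fderiv ℝ Φ η.1).comp (ContinuousLinearMap.fst ℝ E E))).prod
        ((fderiv ℝ Φ η.1).comp (ContinuousLinearMap.snd ℝ E E) +
          ((fderiv ℝ (fderiv ℝ Φ) η.1).comp (ContinuousLinearMap.fst ℝ E E)).flip η.2))) η := by
    have : perturb1 Φ = fun η : E × E => Lmap (Φ η.1, fderiv ℝ Φ η.1 η.2) :=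
      funext fun η => perturb1_eq Φ η
    rw [this]
    exact (Lmap (E := E)).hasFDerivAt.comp η (hg1.prodMk hg2)
  rw [hg.fderiv]
  simp [Lmap_apply, Prod.ext_iff]

/-- The Gateaux derivative (in direction `v`) of the hereditary identity. -/
lemma her_deriv (Φ : E → E →L[ℝ] E) (hΦ : ContDiff ℝ (⊤ : ℕ∞) Φ)
    (hher : ∀ u K S : E,
      fderiv ℝ Φ u (Φ u K) S - Φ u (fderiv ℝ Φ u K S)
        - fderiv ℝ Φ u (Φ u S) K + Φ u (fderiv ℝ Φ u S K) = 0)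
    (u v K S : E) :
    fderiv ℝ (fderiv ℝ Φ) u v (Φ u K) S + fderiv ℝ Φ u (fderiv ℝ Φ u v K) S
      - (fderiv ℝ Φ u v (fderiv ℝ Φ u K S) + Φ u (fderiv ℝ (fderiv ℝ Φ) u v K S))
      - (fderiv ℝ (fderiv ℝ Φ) u v (Φ u S) K + fderiv ℝ Φ u (fderiv ℝ Φ u v S) K)
      + (fderiv ℝ Φ u v (fderiv ℝ Φ u S K) + Φ u (fderiv ℝ (fderiv ℝ Φ) u v S K)) = 0 := by
  have hd1 : ∀ y : E, HasFDerivAt Φ (fderiv ℝ Φ y) y :=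
    fun y => (hΦ.differentiable (by simp) y).hasFDerivAt
  have hΦ' : ContDiff ℝ (⊤ : ℕ∞) (fderiv ℝ Φ) := hΦ.fderiv_right (by simp)
  have hd2 : ∀ y : E, HasFDerivAt (fderiv ℝ Φ) (fderiv ℝ (fderiv ℝ Φ) y) y :=
    fun y => (hΦ'.differentiable (by simp) y).hasFDerivAt
  have hT1 : ∀ K S : E, HasFDerivAt (fun u => fderiv ℝ Φ u (Φ u K) S)
      (((fderiv ℝ Φ u (Φ u K)).comp (0 : E →L[ℝ] E) +
        ((fderiv ℝ Φ u).comp ((Φ u).comp (0 : E →L[ℝ] E) + (fderiv ℝ Φ u).flip K) +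
          (fderiv ℝ (fderiv ℝ Φ) u).flip (Φ u K)).flip S)) u := by
    intro K S
    have ha : HasFDerivAt (fun u => Φ u K)
        ((Φ u).comp (0 : E →L[ℝ] E) + (fderiv ℝ Φ u).flip K) u :=
      (hd1 u).clm_apply (hasFDerivAt_const K u)
    have hb : HasFDerivAt (fun u => fderiv ℝ Φ u (Φ u K))
        ((fderiv ℝ Φ u).comp ((Φ u).comp (0 : E →L[ℝ] E) + (fderiv ℝ Φ u).flip K) +
          (fderiv ℝ (fderiv ℝ Φ) u).flip (Φ u K)) u :=
      (hd2 u).clm_apply ha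
    exact hb.clm_apply (hasFDerivAt_const S u)
  have hT2 : ∀ K S : E, HasFDerivAt (fun u => Φ u (fderiv ℝ Φ u K S))
      ((Φ u).comp ((fderiv ℝ Φ u K).comp (0 : E →L[ℝ] E) +
          ((fderiv ℝ Φ u).comp (0 : E →L[ℝ] E) +
            (fderiv ℝ (fderiv ℝ Φ) u).flip K).flip S) +
        (fderiv ℝ Φ u).flip (fderiv ℝ Φ u K S)) u := by
    intro K S
    have hm : HasFDerivAt (fun u => fderiv ℝ Φ u K)
        ((fderiv ℝ Φ u).comp (0 : E →L[ℝ] E) + (fderiv ℝ (fderiv ℝ Φ) u).flip K) u :=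
      (hd2 u).clm_apply (hasFDerivAt_const K u)
    have hi : HasFDerivAt (fun u => fderiv ℝ Φ u K S)
        ((fderiv ℝ Φ u K).comp (0 : E →L[ℝ] E) +
          ((fderiv ℝ Φ u).comp (0 : E →L[ℝ] E) +
            (fderiv ℝ (fderiv ℝ Φ) u).flip K).flip S) u :=
      hm.clm_apply (hasFDerivAt_const S u)
    exact (hd1 u).clm_apply hi
  have htot := ((((hT1 K S).sub (hT2 K S)).sub (hT1 S K)).add (hT2 S K))
  have hzero : (fun u => fderiv ℝ Φ u (Φ u K) S - Φ u (fderiv ℝ Φ u K S)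
      - fderiv ℝ Φ u (Φ u S) K + Φ u (fderiv ℝ Φ u S K)) = fun _ : E => (0 : E) :=
    funext fun u => hher u K S
  rw [show ((((fun u => fderiv ℝ Φ u (Φ u K) S) - fun u => Φ u (fderiv ℝ Φ u K S))
      - fun u => fderiv ℝ Φ u (Φ u S) K) + fun u => Φ u (fderiv ℝ Φ u S K))
      = fun _ : E => (0 : E) from hzero] at htot
  have h0 := htot.unique (hasFDerivAt_const (0 : E) u)
  have := congrArg (fun (f : E →L[ℝ] E) => f v) h0.symm
  simp at this
  rw [this]
  abel

/-- the first-order perturbation of a hereditary operator is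
hereditary. -/
theorem stmt10 (Φ : E → E →L[ℝ] E) (hΦ : ContDiff ℝ (⊤ : ℕ∞) Φ)
    (hher : Hereditary Φ) : Hereditary (perturb1 Φ) := by
  intro η K S
  have hd1 : ∀ y : E, HasFDerivAt Φ (fderiv ℝ Φ y) y :=
    fun y => (hΦ.differentiable (by simp) y).hasFDerivAt
  have hΦ' : ContDiff ℝ (⊤ : ℕ∞) (fderiv ℝ Φ) := hΦ.fderiv_right (by simp)
  have hd2 : ∀ y : E, HasFDerivAt (fderiv ℝ Φ) (fderiv ℝ (fderiv ℝ Φ) y) y :=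
    fun y => (hΦ'.differentiable (by simp) y).hasFDerivAt
  have hsymm : ∀ a b : E,
      fderiv ℝ (fderiv ℝ Φ) η.1 a b = fderiv ℝ (fderiv ℝ Φ) η.1 b a :=
    second_derivative_symmetric hd1 (hd2 η.1)
  refine Prod.ext ?_ ?_
  · simp only [Prod.fst_add, Prod.fst_sub, fderiv_perturb1 Φ hΦ, perturb1_apply,
      map_add, add_apply, Prod.fst_zero]
    have h := hher η.1 K.1 S.1
    rw [show (0 : E) = fderiv ℝ Φ η.1 (Φ η.1 K.1) S.1 - Φ η.1 (fderiv ℝ Φ η.1 K.1 S.1)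
        - fderiv ℝ Φ η.1 (Φ η.1 S.1) K.1 + Φ η.1 (fderiv ℝ Φ η.1 S.1 K.1) from h.symm]

  · simp only [Prod.snd_add, Prod.snd_sub, fderiv_perturb1 Φ hΦ, perturb1_apply,
      map_add, add_apply, Prod.snd_zero]
    rw [hsymm (Φ η.1 K.1) η.2, hsymm K.1 η.2, hsymm (Φ η.1 S.1) η.2, hsymm S.1 η.2]
    have h1 := hher η.1 K.2 S.1
    have h2 := hher η.1 K.1 S.2
    have h3 := her_deriv Φ hΦ hher η.1 η.2 K.1 S.1
    rw [show (0 : E) =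
        (fderiv ℝ Φ η.1 (Φ η.1 K.2) S.1 - Φ η.1 (fderiv ℝ Φ η.1 K.2 S.1)
          - fderiv ℝ Φ η.1 (Φ η.1 S.1) K.2 + Φ η.1 (fderiv ℝ Φ η.1 S.1 K.2)) +
        (fderiv ℝ Φ η.1 (Φ η.1 K.1) S.2 - Φ η.1 (fderiv ℝ Φ η.1 K.1 S.2)
          - fderiv ℝ Φ η.1 (Φ η.1 S.2) K.1 + Φ η.1 (fderiv ℝ Φ η.1 S.2 K.1)) +
        (fderiv ℝ (fderiv ℝ Φ) η.1 η.2 (Φ η.1 K.1) S.1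
          + fderiv ℝ Φ η.1 (fderiv ℝ Φ η.1 η.2 K.1) S.1
          - (fderiv ℝ Φ η.1 η.2 (fderiv ℝ Φ η.1 K.1 S.1)
            + Φ η.1 (fderiv ℝ (fderiv ℝ Φ) η.1 η.2 K.1 S.1))
          - (fderiv ℝ (fderiv ℝ Φ) η.1 η.2 (Φ η.1 S.1) K.1
            + fderiv ℝ Φ η.1 (fderiv ℝ Φ η.1 η.2 S.1) K.1)
          + (fderiv ℝ Φ η.1 η.2 (fderiv ℝ Φ η.1 S.1 K.1)
            + Φ η.1 (fderiv ℝ (fderiv ℝ Φ) η.1 η.2 S.1 K.1))) from by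
      rw [h1, h2, h3]; simp]
    abel
end

section
/- [σ^{(3)}(f), σ^{(3)}(g)] = σ^{(3)}(f g' − f' g) where σ^{(3)}(f)(u) = −(1/36)f'''·y² + f''·((1/6)y²·u_x − (1/18)x) + f'·((2/3)u + (2/3)y·u_y + (1/3)x·u_x) + f·u_t, the bracket being [A,B](u) = A'(u)[B(u)] − B'(u)[A(u)] with Gateaux derivative in u. -/
/-- `x`-partial derivative of a function of `(x, y, t)`. -/
noncomputable def px (u : ℝ × ℝ × ℝ → ℝ) (p : ℝ × ℝ × ℝ) : ℝ :=
  deriv (fun s => u (s, p.2.1, p.2.2)) p.1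

/-- `y`-partial derivative. -/
noncomputable def py (u : ℝ × ℝ × ℝ → ℝ) (p : ℝ × ℝ × ℝ) : ℝ :=
  deriv (fun s => u (p.1, s, p.2.2)) p.2.1

/-- `t`-partial derivative. -/
noncomputable def pt (u : ℝ × ℝ × ℝ → ℝ) (p : ℝ × ℝ × ℝ) : ℝ :=
  deriv (fun s => u (p.1, p.2.1, s)) p.2.2

/-- The symmetry `σ^{(3)}(f)(u) = −(1/36)f'''·y² + f''((1/6)y²·u_x − (1/18)x)
+ f'((2/3)u + (2/3)y·u_y + (1/3)x·u_x) + f·u_t`. -/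
noncomputable def sigma3 (f : ℝ → ℝ) (u : ℝ × ℝ × ℝ → ℝ) (p : ℝ × ℝ × ℝ) : ℝ :=
  -(1 / 36) * deriv (deriv (deriv f)) p.2.2 * p.2.1 ^ 2 +
    deriv (deriv f) p.2.2 * ((1 / 6) * p.2.1 ^ 2 * px u p - (1 / 18) * p.1) +
    deriv f p.2.2 *
      ((2 / 3) * u p + (2 / 3) * p.2.1 * py u p + (1 / 3) * p.1 * px u p) +
    f p.2.2 * pt u p

/-- The bracket `[A,B](u) = A'(u)[B(u)] − B'(u)[A(u)]` of `u`-dependent fields,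
with Gateaux derivative `A'(u)[B] = d/dδ|₀ A(u + δB)`. -/
noncomputable def gBracket (A B : (ℝ × ℝ × ℝ → ℝ) → ℝ × ℝ × ℝ → ℝ)
    (u : ℝ × ℝ × ℝ → ℝ) (p : ℝ × ℝ × ℝ) : ℝ :=
  deriv (fun δ : ℝ => A (fun q => u q + δ * B u q) p) 0 -
    deriv (fun δ : ℝ => B (fun q => u q + δ * A u q) p) 0

namespace Stmt15Aux

variable {u w : ℝ × ℝ × ℝ → ℝ} {f g : ℝ → ℝ} {p : ℝ × ℝ × ℝ}

lemma hasDerivAt_sliceX (hu : Differentiable ℝ u) (p : ℝ × ℝ × ℝ) :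
    HasDerivAt (fun s => u (s, p.2.1, p.2.2)) (fderiv ℝ u p (1, 0, 0)) p.1 := by
  have h1 : HasDerivAt (fun s : ℝ => ((s, p.2.1, p.2.2) : ℝ × ℝ × ℝ)) (1, 0, 0) p.1 :=
    (hasDerivAt_id p.1).prodMk (hasDerivAt_const _ _)
  simpa [Function.comp_def] using ((hu (p.1, p.2.1, p.2.2)).hasFDerivAt).comp_hasDerivAt p.1 h1

lemma hasDerivAt_sliceY (hu : Differentiable ℝ u) (p : ℝ × ℝ × ℝ) :
    HasDerivAt (fun s => u (p.1, s, p.2.2)) (fderiv ℝ u p (0, 1, 0)) p.2.1 := by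
  have h1 : HasDerivAt (fun s : ℝ => ((p.1, s, p.2.2) : ℝ × ℝ × ℝ)) (0, 1, 0) p.2.1 :=
    (hasDerivAt_const _ _).prodMk ((hasDerivAt_id p.2.1).prodMk (hasDerivAt_const _ _))
  simpa [Function.comp_def] using ((hu (p.1, p.2.1, p.2.2)).hasFDerivAt).comp_hasDerivAt p.2.1 h1

lemma hasDerivAt_sliceT (hu : Differentiable ℝ u) (p : ℝ × ℝ × ℝ) :
    HasDerivAt (fun s => u (p.1, p.2.1, s)) (fderiv ℝ u p (0, 0, 1)) p.2.2 := by
  have h1 : HasDerivAt (fun s : ℝ => ((p.1, p.2.1, s) : ℝ × ℝ × ℝ)) (0, 0, 1) p.2.2 :=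
    (hasDerivAt_const _ _).prodMk ((hasDerivAt_const _ _).prodMk (hasDerivAt_id p.2.2))
  simpa [Function.comp_def] using ((hu (p.1, p.2.1, p.2.2)).hasFDerivAt).comp_hasDerivAt p.2.2 h1

lemma px_eq (hu : Differentiable ℝ u) (p : ℝ × ℝ × ℝ) : px u p = fderiv ℝ u p (1, 0, 0) :=
  (hasDerivAt_sliceX hu p).deriv
lemma py_eq (hu : Differentiable ℝ u) (p : ℝ × ℝ × ℝ) : py u p = fderiv ℝ u p (0, 1, 0) :=
  (hasDerivAt_sliceY hu p).deriv
lemma pt_eq (hu : Differentiable ℝ u) (p : ℝ × ℝ × ℝ) : pt u p = fderiv ℝ u p (0, 0, 1) :=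
  (hasDerivAt_sliceT hu p).deriv

lemma sliceX (hu : ContDiff ℝ (⊤ : ℕ∞) u) (p : ℝ × ℝ × ℝ) :
    HasDerivAt (fun s => u (s, p.2.1, p.2.2)) (px u p) p.1 := by
  rw [px_eq (hu.differentiable (by simp))]; exact hasDerivAt_sliceX (hu.differentiable (by simp)) p
lemma sliceY (hu : ContDiff ℝ (⊤ : ℕ∞) u) (p : ℝ × ℝ × ℝ) :
    HasDerivAt (fun s => u (p.1, s, p.2.2)) (py u p) p.2.1 := by
  rw [py_eq (hu.differentiable (by simp))]; exact hasDerivAt_sliceY (hu.differentiable (by simp)) p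
lemma sliceT (hu : ContDiff ℝ (⊤ : ℕ∞) u) (p : ℝ × ℝ × ℝ) :
    HasDerivAt (fun s => u (p.1, p.2.1, s)) (pt u p) p.2.2 := by
  rw [pt_eq (hu.differentiable (by simp))]; exact hasDerivAt_sliceT (hu.differentiable (by simp)) p

lemma contDiff_fderiv_apply (hu : ContDiff ℝ (⊤ : ℕ∞) u) (v : ℝ × ℝ × ℝ) :
    ContDiff ℝ (⊤ : ℕ∞) (fun q => fderiv ℝ u q v) :=
  (hu.fderiv_right (by simp)).clm_apply contDiff_const

lemma contDiff_px (hu : ContDiff ℝ (⊤ : ℕ∞) u) : ContDiff ℝ (⊤ : ℕ∞) (px u) := by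
  have h : px u = fun q => fderiv ℝ u q (1, 0, 0) :=
    funext fun q => px_eq (hu.differentiable (by simp)) q
  rw [h]; exact contDiff_fderiv_apply hu _
lemma contDiff_py (hu : ContDiff ℝ (⊤ : ℕ∞) u) : ContDiff ℝ (⊤ : ℕ∞) (py u) := by
  have h : py u = fun q => fderiv ℝ u q (0, 1, 0) :=
    funext fun q => py_eq (hu.differentiable (by simp)) q
  rw [h]; exact contDiff_fderiv_apply hu _
lemma contDiff_pt (hu : ContDiff ℝ (⊤ : ℕ∞) u) : ContDiff ℝ (⊤ : ℕ∞) (pt u) := by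
  have h : pt u = fun q => fderiv ℝ u q (0, 0, 1) :=
    funext fun q => pt_eq (hu.differentiable (by simp)) q
  rw [h]; exact contDiff_fderiv_apply hu _

lemma fderiv_fderiv_apply (hu : ContDiff ℝ (⊤ : ℕ∞) u) (p v w : ℝ × ℝ × ℝ) :
    fderiv ℝ (fun q => fderiv ℝ u q v) p w = fderiv ℝ (fderiv ℝ u) p w v := by
  have hD : DifferentiableAt ℝ (fderiv ℝ u) p :=
    ((hu.fderiv_right (m := (⊤ : ℕ∞)) (by simp)).differentiable (by simp)) p
  have h := (ContinuousLinearMap.apply ℝ ℝ v).hasFDerivAt.comp p hD.hasFDerivAt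
  exact congrFun (congrArg _ h.fderiv) w

lemma second_symm (hu : ContDiff ℝ (⊤ : ℕ∞) u) (p v w : ℝ × ℝ × ℝ) :
    fderiv ℝ (fderiv ℝ u) p v w = fderiv ℝ (fderiv ℝ u) p w v :=
  second_derivative_symmetric
    (fun y => ((hu.differentiable (by simp)) y).hasFDerivAt)
    (((hu.fderiv_right (m := (⊤ : ℕ∞)) (by simp)).differentiable (by simp)) p).hasFDerivAt v w

lemma mixed (hu : ContDiff ℝ (⊤ : ℕ∞) u) (p v w : ℝ × ℝ × ℝ) :
    fderiv ℝ (fun q => fderiv ℝ u q v) p w = fderiv ℝ (fun q => fderiv ℝ u q w) p v := by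
  rw [fderiv_fderiv_apply hu, fderiv_fderiv_apply hu, second_symm hu]

lemma comm_xy (hu : ContDiff ℝ (⊤ : ℕ∞) u) (p : ℝ × ℝ × ℝ) : py (px u) p = px (py u) p := by
  have hd := hu.differentiable (by simp)
  have h1 : px u = fun q => fderiv ℝ u q (1, 0, 0) := funext fun q => px_eq hd q
  have h2 : py u = fun q => fderiv ℝ u q (0, 1, 0) := funext fun q => py_eq hd q
  rw [py_eq ((contDiff_px hu).differentiable (by simp)),
    px_eq ((contDiff_py hu).differentiable (by simp)), h1, h2, mixed hu p]

lemma comm_xt (hu : ContDiff ℝ (⊤ : ℕ∞) u) (p : ℝ × ℝ × ℝ) : pt (px u) p = px (pt u) p := by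
  have hd := hu.differentiable (by simp)
  have h1 : px u = fun q => fderiv ℝ u q (1, 0, 0) := funext fun q => px_eq hd q
  have h2 : pt u = fun q => fderiv ℝ u q (0, 0, 1) := funext fun q => pt_eq hd q
  rw [pt_eq ((contDiff_px hu).differentiable (by simp)),
    px_eq ((contDiff_pt hu).differentiable (by simp)), h1, h2, mixed hu p]

lemma comm_yt (hu : ContDiff ℝ (⊤ : ℕ∞) u) (p : ℝ × ℝ × ℝ) : pt (py u) p = py (pt u) p := by
  have hd := hu.differentiable (by simp)
  have h1 : py u = fun q => fderiv ℝ u q (0, 1, 0) := funext fun q => py_eq hd q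
  have h2 : pt u = fun q => fderiv ℝ u q (0, 0, 1) := funext fun q => pt_eq hd q
  rw [pt_eq ((contDiff_py hu).differentiable (by simp)),
    py_eq ((contDiff_pt hu).differentiable (by simp)), h1, h2, mixed hu p]

lemma contDiff_deriv {f : ℝ → ℝ} (hf : ContDiff ℝ (⊤ : ℕ∞) f) : ContDiff ℝ (⊤ : ℕ∞) (deriv f) := by
  rw [show ((⊤ : ℕ∞) : WithTop ℕ∞) = ((⊤ : ℕ∞) : WithTop ℕ∞) + 1 from rfl] at hf
  exact (contDiff_succ_iff_deriv.mp hf).2.2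

lemma contDiff_sigma3 (hg : ContDiff ℝ (⊤ : ℕ∞) g) (hu : ContDiff ℝ (⊤ : ℕ∞) u) :
    ContDiff ℝ (⊤ : ℕ∞) (sigma3 g u) := by
  have hd := hu.differentiable (by simp)
  have h1 : px u = fun q => fderiv ℝ u q (1, 0, 0) := funext fun q => px_eq hd q
  have h2 : py u = fun q => fderiv ℝ u q (0, 1, 0) := funext fun q => py_eq hd q
  have h3 : pt u = fun q => fderiv ℝ u q (0, 0, 1) := funext fun q => pt_eq hd q
  have hg1 : ContDiff ℝ (⊤ : ℕ∞) (deriv g) := contDiff_deriv hg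
  have hg2 : ContDiff ℝ (⊤ : ℕ∞) (deriv (deriv g)) := contDiff_deriv hg1
  have hg3 : ContDiff ℝ (⊤ : ℕ∞) (deriv (deriv (deriv g))) := contDiff_deriv hg2
  have hx := contDiff_fderiv_apply hu ((1:ℝ), (0:ℝ), (0:ℝ))
  have hy := contDiff_fderiv_apply hu ((0:ℝ), (1:ℝ), (0:ℝ))
  have ht := contDiff_fderiv_apply hu ((0:ℝ), (0:ℝ), (1:ℝ))
  unfold sigma3
  rw [h1, h2, h3]
  fun_prop

lemma gateaux (hu : ContDiff ℝ (⊤ : ℕ∞) u) (hw : ContDiff ℝ (⊤ : ℕ∞) w) (f : ℝ → ℝ) (p : ℝ × ℝ × ℝ) :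
    deriv (fun δ : ℝ => sigma3 f (fun q => u q + δ * w q) p) 0 =
      deriv (deriv f) p.2.2 * ((1 / 6) * p.2.1 ^ 2 * px w p) +
        deriv f p.2.2 *
          ((2 / 3) * w p + (2 / 3) * p.2.1 * py w p + (1 / 3) * p.1 * px w p) +
        f p.2.2 * pt w p := by
  set L := deriv (deriv f) p.2.2 * ((1 / 6) * p.2.1 ^ 2 * px w p) +
        deriv f p.2.2 *
          ((2 / 3) * w p + (2 / 3) * p.2.1 * py w p + (1 / 3) * p.1 * px w p) +
        f p.2.2 * pt w p with hL
  have hx : ∀ δ : ℝ, px (fun q => u q + δ * w q) p = px u p + δ * px w p := fun δ =>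
    ((sliceX hu p).add ((sliceX hw p).const_mul δ)).deriv
  have hy : ∀ δ : ℝ, py (fun q => u q + δ * w q) p = py u p + δ * py w p := fun δ =>
    ((sliceY hu p).add ((sliceY hw p).const_mul δ)).deriv
  have ht : ∀ δ : ℝ, pt (fun q => u q + δ * w q) p = pt u p + δ * pt w p := fun δ =>
    ((sliceT hu p).add ((sliceT hw p).const_mul δ)).deriv
  have key : (fun δ : ℝ => sigma3 f (fun q => u q + δ * w q) p) =
      fun δ : ℝ => sigma3 f u p + δ * L := by
    funext δ
    simp only [sigma3, hx δ, hy δ, ht δ, hL]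
    ring
  rw [key]
  simpa using (((hasDerivAt_id (0:ℝ)).mul_const L).const_add (sigma3 f u p)).deriv

lemma px_sigma3 (hu : ContDiff ℝ (⊤ : ℕ∞) u) :
    px (sigma3 g u) p =
      deriv (deriv g) p.2.2 * ((1 / 6) * p.2.1 ^ 2 * px (px u) p - 1 / 18) +
        deriv g p.2.2 * ((2 / 3) * px u p + (2 / 3) * p.2.1 * px (py u) p
          + (1 / 3) * px u p + (1 / 3) * p.1 * px (px u) p) +
        g p.2.2 * px (pt u) p := by
  have Hx := sliceX hu p
  have Hpx := sliceX (contDiff_px hu) p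
  have Hpy := sliceX (contDiff_py hu) p
  have Hpt := sliceX (contDiff_pt hu) p
  have H : HasDerivAt (fun s => sigma3 g u (s, p.2.1, p.2.2)) _ p.1 :=
    (((hasDerivAt_const p.1 (-(1 / 36) * deriv (deriv (deriv g)) p.2.2 * p.2.1 ^ 2)).add
        (((Hpx.const_mul ((1:ℝ) / 6 * p.2.1 ^ 2)).sub
          ((hasDerivAt_id p.1).const_mul ((1:ℝ) / 18))).const_mul (deriv (deriv g) p.2.2))).add
       ((((Hx.const_mul ((2:ℝ) / 3)).add
          (Hpy.const_mul ((2:ℝ) / 3 * p.2.1))).add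
            (((hasDerivAt_id p.1).const_mul ((1:ℝ) / 3)).mul Hpx)).const_mul
          (deriv g p.2.2))).add
      (Hpt.const_mul (g p.2.2))
  refine H.deriv.trans ?_
  simp only [Prod.mk.eta, id_eq]
  ring

lemma py_sigma3 (hu : ContDiff ℝ (⊤ : ℕ∞) u) :
    py (sigma3 g u) p =
      -(1 / 36) * deriv (deriv (deriv g)) p.2.2 * (2 * p.2.1) +
        deriv (deriv g) p.2.2 * ((1 / 3) * p.2.1 * px u p + (1 / 6) * p.2.1 ^ 2 * py (px u) p) +
        deriv g p.2.2 * ((2 / 3) * py u p + (2 / 3) * py u p + (2 / 3) * p.2.1 * py (py u) p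
          + (1 / 3) * p.1 * py (px u) p) +
        g p.2.2 * py (pt u) p := by
  have Hy := sliceY hu p
  have Hpx := sliceY (contDiff_px hu) p
  have Hpy := sliceY (contDiff_py hu) p
  have Hpt := sliceY (contDiff_pt hu) p
  have H : HasDerivAt (fun s => sigma3 g u (p.1, s, p.2.2)) _ p.2.1 :=
    ((((hasDerivAt_pow 2 p.2.1).const_mul (-(1 / 36) * deriv (deriv (deriv g)) p.2.2)).add
        (((((hasDerivAt_pow 2 p.2.1).const_mul ((1:ℝ) / 6)).mul Hpx).sub
          (hasDerivAt_const p.2.1 ((1:ℝ) / 18 * p.1))).const_mul (deriv (deriv g) p.2.2))).add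
       ((((Hy.const_mul ((2:ℝ) / 3)).add
          ((((hasDerivAt_id p.2.1).const_mul ((2:ℝ) / 3)).mul Hpy))).add
            (Hpx.const_mul ((1:ℝ) / 3 * p.1))).const_mul (deriv g p.2.2))).add
      (Hpt.const_mul (g p.2.2))
  refine H.deriv.trans ?_
  simp only [Prod.mk.eta, id_eq]
  ring

lemma pt_sigma3 (hg : ContDiff ℝ (⊤ : ℕ∞) g) (hu : ContDiff ℝ (⊤ : ℕ∞) u) :
    pt (sigma3 g u) p =
      -(1 / 36) * deriv (deriv (deriv (deriv g))) p.2.2 * p.2.1 ^ 2 +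
        deriv (deriv (deriv g)) p.2.2 * ((1 / 6) * p.2.1 ^ 2 * px u p - (1 / 18) * p.1) +
        deriv (deriv g) p.2.2 * ((1 / 6) * p.2.1 ^ 2 * pt (px u) p) +
        deriv (deriv g) p.2.2 *
          ((2 / 3) * u p + (2 / 3) * p.2.1 * py u p + (1 / 3) * p.1 * px u p) +
        deriv g p.2.2 *
          ((2 / 3) * pt u p + (2 / 3) * p.2.1 * pt (py u) p + (1 / 3) * p.1 * pt (px u) p) +
        deriv g p.2.2 * pt u p + g p.2.2 * pt (pt u) p := by
  have Ht := sliceT hu p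
  have Hpx := sliceT (contDiff_px hu) p
  have Hpy := sliceT (contDiff_py hu) p
  have Hpt := sliceT (contDiff_pt hu) p
  have hg1 : ContDiff ℝ (⊤ : ℕ∞) (deriv g) := contDiff_deriv hg
  have hg2 : ContDiff ℝ (⊤ : ℕ∞) (deriv (deriv g)) := contDiff_deriv hg1
  have hg3 : ContDiff ℝ (⊤ : ℕ∞) (deriv (deriv (deriv g))) := contDiff_deriv hg2
  have Hg : HasDerivAt g (deriv g p.2.2) p.2.2 := ((hg.differentiable (by simp)) p.2.2).hasDerivAt
  have Hg1 : HasDerivAt (deriv g) (deriv (deriv g) p.2.2) p.2.2 :=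
    ((hg1.differentiable (by simp)) p.2.2).hasDerivAt
  have Hg2 : HasDerivAt (deriv (deriv g)) (deriv (deriv (deriv g)) p.2.2) p.2.2 :=
    ((hg2.differentiable (by simp)) p.2.2).hasDerivAt
  have Hg3 : HasDerivAt (deriv (deriv (deriv g))) (deriv (deriv (deriv (deriv g))) p.2.2) p.2.2 :=
    ((hg3.differentiable (by simp)) p.2.2).hasDerivAt
  have H : HasDerivAt (fun s => sigma3 g u (p.1, p.2.1, s)) _ p.2.2 :=
    ((((Hg3.const_mul (-(1 / 36) : ℝ)).mul_const (p.2.1 ^ 2)).add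
        (Hg2.mul ((Hpx.const_mul ((1:ℝ) / 6 * p.2.1 ^ 2)).sub
          (hasDerivAt_const p.2.2 ((1:ℝ) / 18 * p.1))))).add
       (Hg1.mul (((Ht.const_mul ((2:ℝ) / 3)).add
          (Hpy.const_mul ((2:ℝ) / 3 * p.2.1))).add
            (Hpx.const_mul ((1:ℝ) / 3 * p.1))))).add
      (Hg.mul Hpt)
  refine H.deriv.trans ?_
  simp only [Prod.mk.eta, id_eq, Pi.add_apply, Pi.sub_apply]
  ring

lemma d1 (hf : ContDiff ℝ (⊤ : ℕ∞) f) (hg : ContDiff ℝ (⊤ : ℕ∞) g) :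
    deriv (fun s => f s * deriv g s - deriv f s * g s) =
      fun s => f s * deriv (deriv g) s - deriv (deriv f) s * g s := by
  funext s
  have H := (((hf.differentiable (by simp) s).hasDerivAt.mul
      ((contDiff_deriv hg).differentiable (by simp) s).hasDerivAt).sub
    (((contDiff_deriv hf).differentiable (by simp) s).hasDerivAt.mul
      (hg.differentiable (by simp) s).hasDerivAt))
  refine H.deriv.trans ?_
  ring

lemma d2 (hf : ContDiff ℝ (⊤ : ℕ∞) f) (hg : ContDiff ℝ (⊤ : ℕ∞) g) :
    deriv (deriv (fun s => f s * deriv g s - deriv f s * g s)) =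
      fun s => deriv f s * deriv (deriv g) s + f s * deriv (deriv (deriv g)) s -
        (deriv (deriv (deriv f)) s * g s + deriv (deriv f) s * deriv g s) := by
  rw [d1 hf hg]
  funext s
  have H := (((hf.differentiable (by simp) s).hasDerivAt.mul
      ((contDiff_deriv (contDiff_deriv hg)).differentiable (by simp) s).hasDerivAt).sub
    (((contDiff_deriv (contDiff_deriv hf)).differentiable (by simp) s).hasDerivAt.mul
      (hg.differentiable (by simp) s).hasDerivAt))
  refine H.deriv.trans ?_
  ring

lemma d3 (hf : ContDiff ℝ (⊤ : ℕ∞) f) (hg : ContDiff ℝ (⊤ : ℕ∞) g) (t : ℝ) :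
    deriv (deriv (deriv (fun s => f s * deriv g s - deriv f s * g s))) t =
      2 * deriv f t * deriv (deriv (deriv g)) t + f t * deriv (deriv (deriv (deriv g))) t -
        deriv (deriv (deriv (deriv f))) t * g t - 2 * deriv (deriv (deriv f)) t * deriv g t := by
  rw [d2 hf hg]
  have hf1 := contDiff_deriv hf
  have hf2 := contDiff_deriv hf1
  have hf3 := contDiff_deriv hf2
  have hg1 := contDiff_deriv hg
  have hg2 := contDiff_deriv hg1
  have hg3 := contDiff_deriv hg2
  have A1 := (hf1.differentiable (by simp) t).hasDerivAt.mul (hg2.differentiable (by simp) t).hasDerivAt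
  have A2 := (hf.differentiable (by simp) t).hasDerivAt.mul (hg3.differentiable (by simp) t).hasDerivAt
  have A3 := (hf3.differentiable (by simp) t).hasDerivAt.mul (hg.differentiable (by simp) t).hasDerivAt
  have A4 := (hf2.differentiable (by simp) t).hasDerivAt.mul (hg1.differentiable (by simp) t).hasDerivAt
  have H := (A1.add A2).sub (A3.add A4)
  refine H.deriv.trans ?_
  ring

end Stmt15Aux

open Stmt15Aux in
/-- `[σ³(f), σ³(g)] = σ³(f g' − f' g)`. -/
theorem stmt15 (f g : ℝ → ℝ) (hf : ContDiff ℝ (⊤ : ℕ∞) f) (hg : ContDiff ℝ (⊤ : ℕ∞) g)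
    (u : ℝ × ℝ × ℝ → ℝ) (hu : ContDiff ℝ (⊤ : ℕ∞) u) (p : ℝ × ℝ × ℝ) :
    gBracket (sigma3 f) (sigma3 g) u p =
      sigma3 (fun t => f t * deriv g t - deriv f t * g t) u p := by
  unfold gBracket
  rw [gateaux hu (contDiff_sigma3 hg hu) f p, gateaux hu (contDiff_sigma3 hf hu) g p,
    px_sigma3 (g := g) hu, py_sigma3 (g := g) hu, pt_sigma3 hg hu,
    px_sigma3 (g := f) hu, py_sigma3 (g := f) hu, pt_sigma3 hf hu]
  simp only [sigma3]
  rw [d3 hf hg, d2 hf hg, d1 hf hg,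
    comm_xy hu p, comm_xt hu p, comm_yt hu p]
  ring
end
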